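/- arXiv:2603.12398 — 2 statements merged into one kernel-verified Lean document; each statement's English description precedes it below -/
import Mathlib

section
/- Let x : [0,∞) → ℂⁿ solve ẋ = F₂(x^{⊗2}) + F₁x + F₀(t), and let P ≻ 0 be Hermitian with μ_P(F₁) = λ_max((P^{1/2}F₁P^{−1/2} + h.c.)/2) and β_P = sup_{x≠0} Re⟨x, F₂(x^{⊗2})⟩_P / ‖x‖_P² < ∞. Then for every γ > 0, setting κ = 2μ_P(F₁) + 2β_P + γ, the energy V(t) = ‖x(t)‖_P² satisfies the differential inequality V̇(t) ≤ κ·V(t) + (1/γ)·‖F₀(t)‖_P², and consequently ‖x(t)‖_P² ≤ e^{κt}‖x(0)‖_P² + ((e^{κt}−1)/κ)·(1/γ)·sup_{0≤s≤t}‖F₀(s)‖_P². -/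
/-!
Along a solution, `V = ‖x‖_P²` has derivative `2 Re⟨x, ẋ⟩_P`. The three terms of `ẋ` are
controlled by the logarithmic norm `μ_P`, the one-sided bound `β_P` and Young's inequality
`2 Re⟨x, F₀⟩_P ≤ γ‖x‖_P² + ‖F₀‖_P²/γ`, which gives `V̇ ≤ κV + ‖F₀‖_P²/γ`. Bounding `‖F₀‖_P²` by its
supremum over `[0, t]` (finite, as `F₀` is continuous) and applying Grönwall's inequality with
constant forcing yields the integrated estimate, whose right-hand side is Mathlib's `gronwallBound`.
-/

open Matrix Set
open scoped ComplexOrder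

section Derivatives

variable {𝕜 𝔸 : Type*} [NontriviallyNormedField 𝕜] [NormedRing 𝔸]
  [NormedAlgebra 𝕜 𝔸] {m : Type*} [Fintype m] {t : 𝕜}

theorem HasDerivAt.dotProduct {u v : 𝕜 → m → 𝔸} {u' v' : m → 𝔸}
    (hu : HasDerivAt u u' t) (hv : HasDerivAt v v' t) :
    HasDerivAt (fun s => u s ⬝ᵥ v s) (u' ⬝ᵥ v t + u t ⬝ᵥ v') t := by
  simp only [_root_.dotProduct, ← Finset.sum_add_distrib]
  exact HasDerivAt.fun_sum fun i _ =>
    (hasDerivAt_pi.1 hu i).fun_mul (hasDerivAt_pi.1 hv i)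

theorem HasDerivAt.mulVec {l : Type*} (A : Matrix l m 𝔸) {v : 𝕜 → m → 𝔸}
    {v' : m → 𝔸} (hv : HasDerivAt v v' t) :
    HasDerivAt (fun s => A *ᵥ v s) (A *ᵥ v') t :=
  hasDerivAt_pi.2 fun i =>
    ((hasDerivAt_const t (A i)).dotProduct hv).congr_deriv (by rw [zero_dotProduct, zero_add]; rfl)

end Derivatives

section HermitianForm

variable {n : Type*} [Fintype n] {P : Matrix n n ℂ}

theorem Matrix.IsHermitian.re_star_dotProduct_mulVec_comm (hP : P.IsHermitian)
    (u v : n → ℂ) : (star u ⬝ᵥ (P *ᵥ v)).re = (star v ⬝ᵥ (P *ᵥ u)).re := by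
  rw [star_dotProduct, star_mulVec, hP.eq, ← dotProduct_mulVec, Complex.star_def,
    Complex.conj_re]

theorem Matrix.IsHermitian.hasDerivAt_re_star_dotProduct_mulVec (hP : P.IsHermitian)
    {x : ℝ → n → ℂ} {x' : n → ℂ} {t : ℝ} (hx : HasDerivAt x x' t) :
    HasDerivAt (fun s => (star (x s) ⬝ᵥ (P *ᵥ x s)).re)
      (2 * (star (x t) ⬝ᵥ (P *ᵥ x')).re) t := by
  have h := Complex.reCLM.hasFDerivAt.comp_hasDerivAt t (hx.star.dotProduct (hx.mulVec P))
  simp only [Function.comp_def, Complex.reCLM_apply, Complex.add_re,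
    hP.re_star_dotProduct_mulVec_comm x'] at h
  exact h.congr_deriv (two_mul _).symm

theorem Matrix.PosSemidef.two_mul_re_star_dotProduct_mulVec_le (hP : P.PosSemidef) {γ : ℝ}
    (hγ : 0 < γ) (u v : n → ℂ) :
    2 * (star u ⬝ᵥ (P *ᵥ v)).re ≤
      γ * (star u ⬝ᵥ (P *ᵥ u)).re + (1 / γ) * (star v ⬝ᵥ (P *ᵥ v)).re := by
  have hsq : 0 ≤ (star ((γ : ℂ) • u - v) ⬝ᵥ (P *ᵥ ((γ : ℂ) • u - v))).re / γ :=
    div_nonneg (hP.re_dotProduct_nonneg _) hγ.le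
  simp only [star_sub, star_smul, mulVec_sub, mulVec_smul, sub_dotProduct, dotProduct_sub,
    smul_dotProduct, dotProduct_smul, Complex.star_def, Complex.conj_ofReal, smul_eq_mul,
    Complex.sub_re, Complex.re_ofReal_mul, hP.isHermitian.re_star_dotProduct_mulVec_comm v u]
    at hsq
  have hscale : ∀ A B C : ℝ,
      (γ * (γ * A - B) - (γ * B - C)) / γ = γ * A + 1 / γ * C - 2 * B := by
    intro A B C; field_simp; ring
  linarith [hscale (star u ⬝ᵥ (P *ᵥ u)).re (star u ⬝ᵥ (P *ᵥ v)).re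
    (star v ⬝ᵥ (P *ᵥ v)).re]

theorem Matrix.PosSemidef.two_mul_re_star_dotProduct_mulVec_add_le (hP : P.PosSemidef)
    {γ μ β : ℝ} (hγ : 0 < γ) {z a b f : n → ℂ}
    (ha : (star z ⬝ᵥ (P *ᵥ a)).re ≤ β * (star z ⬝ᵥ (P *ᵥ z)).re)
    (hb : (star z ⬝ᵥ (P *ᵥ b)).re ≤ μ * (star z ⬝ᵥ (P *ᵥ z)).re) :
    2 * (star z ⬝ᵥ (P *ᵥ (a + b + f))).re ≤
      (2 * μ + 2 * β + γ) * (star z ⬝ᵥ (P *ᵥ z)).re +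
        (1 / γ) * (star f ⬝ᵥ (P *ᵥ f)).re := by
  simp only [mulVec_add, dotProduct_add, Complex.add_re]
  linarith [hP.two_mul_re_star_dotProduct_mulVec_le hγ z f]

end HermitianForm

theorem le_gronwallBound_of_hasDerivAt_le {f f' : ℝ → ℝ} {K ε a b : ℝ}
    (hf : ∀ x ∈ Icc a b, HasDerivAt f (f' x) x)
    (bound : ∀ x ∈ Ico a b, f' x ≤ K * f x + ε) :
    ∀ x ∈ Icc a b, f x ≤ gronwallBound (f a) K ε (x - a) :=
  le_gronwallBound_of_liminf_deriv_right_le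
    (fun x hx => (hf x hx).continuousAt.continuousWithinAt)
    (fun x hx _ hr => ((hf x (Ico_subset_Icc_self hx)).hasDerivWithinAt.liminf_right_slope_le
      hr).mono fun _ hz => by rwa [slope_def_field, div_eq_inv_mul] at hz)
    le_rfl bound

theorem gronwallBound_eq (δ K ε x : ℝ) :
    gronwallBound δ K ε x =
      Real.exp (K * x) * δ + (if K = 0 then x else (Real.exp (K * x) - 1) / K) * ε := by
  unfold gronwallBound
  split_ifs with hK
  · simp [hK, mul_comm]
  · ring

/-- Energy estimate for the OU-driven quadratic system `ẋ = F₂(x^{⊗2}) + F₁x + F₀(t)`: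
with the Lyapunov energy `V(t) = ‖x(t)‖_P² = (x(t)† P x(t)).re`, the logarithmic-norm bound
`Re⟨z, F₁z⟩_P ≤ μ_P·‖z‖_P²`, the one-sided nonlinearity bound
`Re⟨z, F₂(z^{⊗2})⟩_P ≤ β_P·‖z‖_P²`, and any `γ > 0`, setting `κ = 2μ_P + 2β_P + γ` one has
`V̇(t) ≤ κ·V(t) + (1/γ)·‖F₀(t)‖_P²` and the Grönwall consequence
`V(t) ≤ e^{κt}V(0) + ((e^{κt}−1)/κ)·(1/γ)·sup_{[0,t]}‖F₀‖_P²` (with `(e^{κt}−1)/κ = t`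
when `κ = 0`). -/
theorem lyapunov_energy_estimate {n : ℕ}
    (P F₁ : Matrix (Fin n) (Fin n) ℂ) (F₂ : Matrix (Fin n) (Fin n × Fin n) ℂ)
    (hP : P.PosDef)
    (x F₀ : ℝ → (Fin n → ℂ))
    (hF₀ : Continuous F₀)
    (hx : ∀ t : ℝ, HasDerivAt x
      ((F₂ *ᵥ fun p => x t p.1 * x t p.2) + F₁ *ᵥ x t + F₀ t) t)
    (μP βP γ κ : ℝ) (hγ : 0 < γ) (hκ : κ = 2 * μP + 2 * βP + γ)
    (hμ : ∀ z : Fin n → ℂ,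
      (star z ⬝ᵥ (P *ᵥ (F₁ *ᵥ z))).re ≤ μP * (star z ⬝ᵥ (P *ᵥ z)).re)
    (hβ : ∀ z : Fin n → ℂ,
      (star z ⬝ᵥ (P *ᵥ (F₂ *ᵥ fun p => z p.1 * z p.2))).re ≤
        βP * (star z ⬝ᵥ (P *ᵥ z)).re) :
    (∀ t : ℝ, deriv (fun s => (star (x s) ⬝ᵥ (P *ᵥ x s)).re) t ≤
        κ * (star (x t) ⬝ᵥ (P *ᵥ x t)).re +
          (1 / γ) * (star (F₀ t) ⬝ᵥ (P *ᵥ F₀ t)).re) ∧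
      ∀ t : ℝ, 0 ≤ t →
        (star (x t) ⬝ᵥ (P *ᵥ x t)).re ≤
          Real.exp (κ * t) * (star (x 0) ⬝ᵥ (P *ᵥ x 0)).re +
            (if κ = 0 then t else (Real.exp (κ * t) - 1) / κ) *
              ((1 / γ) *
                sSup ((fun s => (star (F₀ s) ⬝ᵥ (P *ᵥ F₀ s)).re) '' Set.Icc 0 t)) := by
  subst hκ
  have hV : ∀ t, HasDerivAt (fun s => (star (x s) ⬝ᵥ (P *ᵥ x s)).re) _ t := fun t =>
    hP.isHermitian.hasDerivAt_re_star_dotProduct_mulVec (hx t)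
  have hV' : ∀ t, _ ≤ (2 * μP + 2 * βP + γ) * (star (x t) ⬝ᵥ (P *ᵥ x t)).re +
      (1 / γ) * (star (F₀ t) ⬝ᵥ (P *ᵥ F₀ t)).re := fun t =>
    hP.posSemidef.two_mul_re_star_dotProduct_mulVec_add_le hγ (hβ (x t)) (hμ (x t))
  refine ⟨fun t => (hV t).deriv ▸ hV' t, fun t ht => ?_⟩
  have hF₀_le : ∀ s ∈ Icc 0 t, (star (F₀ s) ⬝ᵥ (P *ᵥ F₀ s)).re ≤
      sSup ((fun s => (star (F₀ s) ⬝ᵥ (P *ᵥ F₀ s)).re) '' Icc 0 t) := fun s hs =>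
    le_csSup ((isCompact_Icc.image (by fun_prop)).bddAbove) (mem_image_of_mem _ hs)
  have := le_gronwallBound_of_hasDerivAt_le (ε := 1 / γ * sSup _) (fun s _ => hV s)
    (fun s hs => (hV' s).trans (by gcongr; exact hF₀_le s (Ico_subset_Icc_self hs)))
    t ⟨ht, le_rfl⟩
  rwa [sub_zero, gronwallBound_eq] at this
end

section
/- Let H : [0,T] → ℂ^{n×n} satisfy ‖H(t)‖ ≤ Λ for all t and the Hölder condition ‖H(t) − H(s)‖ ≤ C·|t−s|^α for some α ∈ (0,1], C ≥ 0. Fix a grid with mesh h = T/M and left-endpoint map τ(t) = h·⌊t/h⌋. Then for each k ≥ 1, the left-endpoint Riemann discretization Q_k of the ordered Dyson integral I_k = ∫_{0≤t₁≤⋯≤t_k≤T} H(t_k)⋯H(t₁) dt satisfies ‖I_k − Q_k‖ ≤ C·Λ^{k−1}·T^k·h^α/(k−1)!, and summing over 1 ≤ k ≤ K gives Σ_{k=1}^K ‖I_k − Q_k‖ ≤ C·T·e^{ΛT}·h^α. -/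
/-!
On the simplex both integrands are products of `k` operators of norm at most `Λ`, and the
Hölder condition with `|t - τ(t)| ≤ h` makes corresponding factors differ by at most `C h^α`;
telescoping bounds the difference of the integrands by `k Λ^{k-1} C h^α`. The simplex has volume
`T^k / k!`, because its `k!` images under permutations of the coordinates tile the cube
`[0,T]^k` up to the null set of tuples with a repeated entry. Since
`k Λ^{k-1} T^k / k! = T (ΛT)^{k-1} / (k-1)!`, the sum over `k` is at most `T e^{ΛT}`.
-/

open MeasureTheory

/-- The ordered simplex `{t : 0 ≤ t₁ ≤ ⋯ ≤ t_k ≤ T}`. -/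
def orderedSimplex (T : ℝ) (k : ℕ) : Set (Fin k → ℝ) :=
  {t | Monotone t ∧ ∀ i, t i ∈ Set.Icc 0 T}

/-- The left-endpoint map `τ(t) = h·⌊t/h⌋` onto a grid of mesh `h`. -/
noncomputable def leftGrid (h t : ℝ) : ℝ := h * (⌊t / h⌋ : ℤ)

/-- The `k`-th ordered Dyson integral `I_k`. -/
noncomputable def dysonIntegral {n : ℕ} (T : ℝ)
    (H : ℝ → EuclideanSpace ℂ (Fin n) →L[ℂ] EuclideanSpace ℂ (Fin n)) (k : ℕ) :
    EuclideanSpace ℂ (Fin n) →L[ℂ] EuclideanSpace ℂ (Fin n) :=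
  ∫ t in orderedSimplex T k, (List.ofFn fun i => H (t i)).reverse.prod

/-- The left-endpoint Riemann discretization `Q_k` of the ordered Dyson integral,
obtained by replacing each time `t_j` by its left gridpoint `τ(t_j)`. -/
noncomputable def dysonRiemann {n : ℕ} (T h : ℝ)
    (H : ℝ → EuclideanSpace ℂ (Fin n) →L[ℂ] EuclideanSpace ℂ (Fin n)) (k : ℕ) :
    EuclideanSpace ℂ (Fin n) →L[ℂ] EuclideanSpace ℂ (Fin n) :=
  ∫ t in orderedSimplex T k, (List.ofFn fun i => H (leftGrid h (t i))).reverse.prod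

open scoped ENNReal Nat

namespace List

variable {ι A : Type*} [NormedRing A] {f g : ι → A} {Λ δ : ℝ}

-- `‖1‖ ≤ 1` rather than `NormOneClass`: the operators on the zero space have `‖1‖ = 0`.

theorem norm_prod_map_le_pow (h1 : ‖(1 : A)‖ ≤ 1) :
    ∀ {l : List ι}, (∀ i ∈ l, ‖f i‖ ≤ Λ) → ‖(l.map f).prod‖ ≤ Λ ^ l.length
  | [], _ => by simpa using h1
  | a :: l, hf => by
    rw [forall_mem_cons] at hf
    rw [map_cons, prod_cons, length_cons, pow_succ']
    exact (norm_mul_le _ _).trans <| mul_le_mul hf.1 (norm_prod_map_le_pow h1 hf.2)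
      (norm_nonneg _) ((norm_nonneg _).trans hf.1)

theorem norm_prod_map_sub_prod_map_le (h1 : ‖(1 : A)‖ ≤ 1) :
    ∀ {l : List ι}, (∀ i ∈ l, ‖f i‖ ≤ Λ) → (∀ i ∈ l, ‖g i‖ ≤ Λ) →
      (∀ i ∈ l, ‖f i - g i‖ ≤ δ) →
      ‖(l.map f).prod - (l.map g).prod‖ ≤ l.length * Λ ^ (l.length - 1) * δ
  | [], _, _, _ => by simp
  | a :: l, hf, hg, hfg => by
    rw [forall_mem_cons] at hf hg hfg
    set P := (l.map f).prod
    set Q := (l.map g).prod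
    have hΛ : 0 ≤ Λ := (norm_nonneg _).trans hf.1
    have hδ : 0 ≤ δ := (norm_nonneg _).trans hfg.1
    have hP : ‖P‖ ≤ Λ ^ l.length := norm_prod_map_le_pow h1 hf.2
    have hPQ : ‖P - Q‖ ≤ l.length * Λ ^ (l.length - 1) * δ :=
      norm_prod_map_sub_prod_map_le h1 hf.2 hg.2 hfg.2
    have hpow : Λ * (l.length * Λ ^ (l.length - 1) * δ) = l.length * Λ ^ l.length * δ := by
      rcases Nat.eq_zero_or_pos l.length with h0 | hpos
      · simp [h0]
      · rw [← mul_pow_sub_one hpos.ne' Λ]; ring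
    rw [map_cons, map_cons, prod_cons, prod_cons, length_cons, Nat.add_sub_cancel]
    calc ‖f a * P - g a * Q‖ = ‖(f a - g a) * P + g a * (P - Q)‖ := by noncomm_ring
      _ ≤ ‖f a - g a‖ * ‖P‖ + ‖g a‖ * ‖P - Q‖ :=
        (norm_add_le _ _).trans (add_le_add (norm_mul_le _ _) (norm_mul_le _ _))
      _ ≤ δ * Λ ^ l.length + Λ * (l.length * Λ ^ (l.length - 1) * δ) :=
        add_le_add (mul_le_mul hfg.1 hP (norm_nonneg _) hδ)
          (mul_le_mul hg.1 hPQ (norm_nonneg _) hΛ)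
      _ = ((l.length + 1 : ℕ) : ℝ) * Λ ^ l.length * δ := by rw [hpow]; push_cast; ring

end List

theorem List.reverse_ofFn_comp_eq_map {α β : Type*} {k : ℕ} (H : α → β) (t : Fin k → α) :
    (List.ofFn fun i => H (t i)).reverse = (List.ofFn t).reverse.map H := by
  rw [List.map_reverse, List.map_ofFn]; rfl

theorem measurePreserving_comp_perm {ι : Type*} [Fintype ι] (σ : Equiv.Perm ι) :
    MeasurePreserving (fun t : ι → ℝ => t ∘ σ) := by
  convert volume_preserving_arrowCongr' σ.symm (MeasurableEquiv.refl ℝ) (.id _) using 1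
  ext t i
  rfl

theorem volume_setOf_not_injective {ι : Type*} [Fintype ι] :
    volume {t : ι → ℝ | ¬ Function.Injective t} = 0 := by
  classical
  have hsub : {t : ι → ℝ | ¬ Function.Injective t} ⊆
      ⋃ (i : ι) (j : ι) (_ : i ≠ j),
        (LinearMap.ker ((LinearMap.proj i : (ι → ℝ) →ₗ[ℝ] ℝ) - LinearMap.proj j) :
          Set (ι → ℝ)) := by
    intro t ht
    simp only [Function.Injective, not_forall] at ht
    obtain ⟨i, j, hij, hne⟩ := ht
    simp only [Set.mem_iUnion, SetLike.mem_coe, LinearMap.mem_ker]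
    exact ⟨i, j, hne, by simp [hij]⟩
  refine measure_mono_null hsub <| measure_iUnion_null fun i => measure_iUnion_null fun j =>
    measure_iUnion_null fun hij => Measure.addHaar_submodule _ _ fun htop => ?_
  have : (Pi.single i 1 : ι → ℝ) ∈ LinearMap.ker
      ((LinearMap.proj i : (ι → ℝ) →ₗ[ℝ] ℝ) - LinearMap.proj j) := htop ▸ Submodule.mem_top
  simp [hij.symm] at this

theorem orderedSimplex_eq (T : ℝ) (k : ℕ) :
    orderedSimplex T k = {t | Monotone t} ∩ Set.univ.pi fun _ => Set.Icc 0 T := by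
  ext t
  simp only [orderedSimplex, Set.mem_inter_iff, Set.mem_univ_pi]
  rfl

theorem isCompact_orderedSimplex (T : ℝ) (k : ℕ) : IsCompact (orderedSimplex T k) := by
  rw [orderedSimplex_eq]
  exact (isCompact_univ_pi fun _ => isCompact_Icc).inter_left isClosed_monotone

theorem measurableSet_orderedSimplex (T : ℝ) (k : ℕ) : MeasurableSet (orderedSimplex T k) :=
  (isCompact_orderedSimplex T k).isClosed.measurableSet

theorem iUnion_preimage_comp_perm_orderedSimplex (T : ℝ) (k : ℕ) :
    ⋃ σ : Equiv.Perm (Fin k), (fun t => t ∘ σ) ⁻¹' orderedSimplex T k =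
      Set.univ.pi fun _ => Set.Icc 0 T := by
  ext t
  simp only [Set.mem_iUnion, Set.mem_preimage, Set.mem_univ_pi, orderedSimplex, Set.mem_ofPred_eq,
    Function.comp_apply]
  constructor
  · rintro ⟨σ, -, ht⟩ i
    simpa using ht (σ.symm i)
  · exact fun ht => ⟨Tuple.sort t, Tuple.monotone_sort t, fun i => ht _⟩

theorem aedisjoint_preimage_comp_perm_orderedSimplex (T : ℝ) (k : ℕ) :
    Pairwise fun σ τ : Equiv.Perm (Fin k) => AEDisjoint volume
      ((fun t => t ∘ σ) ⁻¹' orderedSimplex T k) ((fun t => t ∘ τ) ⁻¹' orderedSimplex T k) := by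
  intro σ τ hστ
  refine measure_mono_null ?_ volume_setOf_not_injective
  rintro t ⟨⟨hσ, -⟩, ⟨hτ, -⟩⟩ hinj
  refine hστ (Equiv.ext fun i => ?_)
  exact hinj (congrFun (Tuple.unique_monotone hσ hτ) i)

theorem factorial_mul_volume_orderedSimplex (T : ℝ) (k : ℕ) :
    (k ! : ℝ≥0∞) * volume (orderedSimplex T k) = ENNReal.ofReal T ^ k := by
  have hmeas (σ : Equiv.Perm (Fin k)) :
      MeasurableSet ((fun t => t ∘ σ) ⁻¹' orderedSimplex T k) :=
    (measurableSet_orderedSimplex T k).preimage (measurePreserving_comp_perm σ).measurable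
  calc (k ! : ℝ≥0∞) * volume (orderedSimplex T k)
      = ∑' σ : Equiv.Perm (Fin k), volume ((fun t => t ∘ σ) ⁻¹' orderedSimplex T k) := by
        simp only [(measurePreserving_comp_perm _).measure_preimage
          (measurableSet_orderedSimplex T k).nullMeasurableSet, tsum_fintype, Finset.sum_const,
          Finset.card_univ, Fintype.card_perm, Fintype.card_fin, nsmul_eq_mul]
    _ = volume (⋃ σ : Equiv.Perm (Fin k), (fun t => t ∘ σ) ⁻¹' orderedSimplex T k) :=
        (measure_iUnion₀ (aedisjoint_preimage_comp_perm_orderedSimplex T k) fun σ =>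
          (hmeas σ).nullMeasurableSet).symm
    _ = ENNReal.ofReal T ^ k := by
        rw [iUnion_preimage_comp_perm_orderedSimplex, volume_pi_pi]
        simp [Real.volume_Icc]

theorem measureReal_orderedSimplex (T : ℝ) (hT : 0 ≤ T) (k : ℕ) :
    volume.real (orderedSimplex T k) = T ^ k / k ! := by
  have h := congrArg ENNReal.toReal (factorial_mul_volume_orderedSimplex T k)
  rw [ENNReal.toReal_mul, ENNReal.toReal_pow, ENNReal.toReal_ofReal hT,
    ENNReal.toReal_natCast] at h
  rw [measureReal_def, eq_div_iff (by positivity), ← h, mul_comm]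

theorem sub_leftGrid {h : ℝ} (hh : h ≠ 0) (t : ℝ) :
    t - leftGrid h t = h * Int.fract (t / h) := by
  rw [leftGrid, Int.fract, mul_sub, mul_div_cancel₀ t hh]

theorem leftGrid_mem_Icc {h T t : ℝ} (hh : 0 < h) (ht : t ∈ Set.Icc 0 T) :
    leftGrid h t ∈ Set.Icc 0 T := by
  have hle : leftGrid h t ≤ t :=
    sub_nonneg.1 <| (sub_leftGrid hh.ne' t).symm ▸ mul_nonneg hh.le (Int.fract_nonneg _)
  exact ⟨mul_nonneg hh.le (Int.cast_nonneg (Int.floor_nonneg.2 (div_nonneg ht.1 hh.le))),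
    hle.trans ht.2⟩

theorem abs_sub_leftGrid_le {h : ℝ} (hh : 0 < h) (t : ℝ) : |t - leftGrid h t| ≤ h := by
  rw [sub_leftGrid hh.ne', abs_of_nonneg (mul_nonneg hh.le (Int.fract_nonneg _))]
  exact mul_le_of_le_one_right hh.le (Int.fract_lt_one _).le

theorem measurable_leftGrid (h : ℝ) : Measurable (leftGrid h) :=
  measurable_const.mul (Measurable.of_discrete.comp (measurable_id.div_const h).floor)

theorem sum_Icc_pow_pred_div_factorial_le_exp {x : ℝ} (hx : 0 ≤ x) (K : ℕ) :
    ∑ k ∈ Finset.Icc 1 K, x ^ (k - 1) / (k - 1)! ≤ Real.exp x := by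
  rw [← Finset.Ico_add_one_right_eq_Icc, Finset.sum_Ico_eq_sum_range]
  simpa [add_tsub_cancel_left] using Real.sum_le_exp_of_nonneg hx K

section Dyson

variable {n : ℕ} {T Λ δ : ℝ} {k : ℕ}
  {H H' : ℝ → EuclideanSpace ℂ (Fin n) →L[ℂ] EuclideanSpace ℂ (Fin n)}

theorem norm_one_continuousLinearMap_le :
    ‖(1 : EuclideanSpace ℂ (Fin n) →L[ℂ] EuclideanSpace ℂ (Fin n))‖ ≤ 1 :=
  ContinuousLinearMap.norm_id_le

theorem mem_Icc_of_mem_reverse_ofFn {t : Fin k → ℝ} (ht : t ∈ orderedSimplex T k) :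
    ∀ s ∈ (List.ofFn t).reverse, s ∈ Set.Icc 0 T := by
  simp only [List.mem_reverse, List.mem_ofFn]
  rintro _ ⟨i, rfl⟩
  exact ht.2 i

theorem integrableOn_dysonIntegrand (hH : StronglyMeasurable H)
    (hHb : ∀ t ∈ Set.Icc 0 T, ‖H t‖ ≤ Λ) :
    IntegrableOn (fun t : Fin k → ℝ => (List.ofFn fun i => H (t i)).reverse.prod)
      (orderedSimplex T k) := by
  have hsm :
      StronglyMeasurable fun t : Fin k → ℝ => (List.ofFn fun i => H (t i)).reverse.prod := by
    simpa [List.map_reverse, List.map_ofFn, Function.comp_def] using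
      List.stronglyMeasurable_fun_prod
      (List.ofFn fun i => fun t : Fin k → ℝ => H (t i)).reverse
      (by
        simp only [List.mem_reverse, List.mem_ofFn]
        rintro _ ⟨i, rfl⟩
        exact hH.comp_measurable (measurable_pi_apply i))
  refine Measure.integrableOn_of_bounded (M := Λ ^ k)
    (isCompact_orderedSimplex T k).measure_lt_top.ne hsm.aestronglyMeasurable
    ((ae_restrict_iff' (measurableSet_orderedSimplex T k)).2 <|
      .of_forall fun t ht => ?_)
  simpa [List.reverse_ofFn_comp_eq_map] using
    List.norm_prod_map_le_pow norm_one_continuousLinearMap_le fun s hs =>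
      hHb s (mem_Icc_of_mem_reverse_ofFn ht s hs)

theorem norm_dysonIntegral_sub_le (hT : 0 ≤ T) (hH : StronglyMeasurable H)
    (hH' : StronglyMeasurable H') (hHb : ∀ t ∈ Set.Icc 0 T, ‖H t‖ ≤ Λ)
    (hH'b : ∀ t ∈ Set.Icc 0 T, ‖H' t‖ ≤ Λ) (hclose : ∀ t ∈ Set.Icc 0 T, ‖H t - H' t‖ ≤ δ)
    (hk : 1 ≤ k) :
    ‖dysonIntegral T H k - dysonIntegral T H' k‖ ≤ δ * Λ ^ (k - 1) * T ^ k / (k - 1)! := by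
  have hpoint : ∀ t ∈ orderedSimplex T k, ‖(List.ofFn fun i => H (t i)).reverse.prod -
      (List.ofFn fun i => H' (t i)).reverse.prod‖ ≤ k * Λ ^ (k - 1) * δ := by
    intro t ht
    have hmem := mem_Icc_of_mem_reverse_ofFn ht
    simpa [List.reverse_ofFn_comp_eq_map] using List.norm_prod_map_sub_prod_map_le
      norm_one_continuousLinearMap_le (fun s hs => hHb s (hmem s hs))
      (fun s hs => hH'b s (hmem s hs)) (fun s hs => hclose s (hmem s hs))
  rw [dysonIntegral, dysonIntegral, ← integral_sub (integrableOn_dysonIntegrand hH hHb)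
    (integrableOn_dysonIntegrand hH' hH'b)]
  calc _ ≤ k * Λ ^ (k - 1) * δ * volume.real (orderedSimplex T k) :=
        norm_setIntegral_le_of_norm_le_const (isCompact_orderedSimplex T k).measure_lt_top hpoint
    _ = δ * Λ ^ (k - 1) * T ^ k / (k - 1)! := by
        rw [measureReal_orderedSimplex T hT, ← Nat.mul_factorial_pred (by omega : k ≠ 0)]
        push_cast
        field_simp

theorem norm_sub_comp_leftGrid_le {h α C : ℝ} (hh : 0 < h) (hα : 0 ≤ α) (hC : 0 ≤ C)
    (hholder : ∀ s ∈ Set.Icc 0 T, ∀ t ∈ Set.Icc 0 T, ‖H t - H s‖ ≤ C * |t - s| ^ α) :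
    ∀ t ∈ Set.Icc 0 T, ‖H t - H (leftGrid h t)‖ ≤ C * h ^ α := fun t ht =>
  (hholder _ (leftGrid_mem_Icc hh ht) t ht).trans <| mul_le_mul_of_nonneg_left
    (Real.rpow_le_rpow (abs_nonneg _) (abs_sub_leftGrid_le hh t) hα) hC

theorem dysonRiemann_eq_dysonIntegral (h : ℝ) :
    dysonRiemann T h H k = dysonIntegral T (fun s => H (leftGrid h s)) k :=
  rfl

end Dyson

/-- Discretization error of the ordered Dyson integrals under a Hölder condition:
`‖I_k − Q_k‖ ≤ C·Λ^{k−1}·T^k·h^α/(k−1)!`, and summing over `1 ≤ k ≤ K` gives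
`Σ_{k=1}^K ‖I_k − Q_k‖ ≤ C·T·e^{ΛT}·h^α`. -/
theorem dyson_riemann_discretization_error {n : ℕ}
    (T : ℝ) (hT : 0 < T) (M : ℕ) (hM : 0 < M) (h : ℝ) (hh : h = T / M)
    (α : ℝ) (hα : α ∈ Set.Ioc (0 : ℝ) 1) (C Λ : ℝ) (hC : 0 ≤ C) (hΛ : 0 ≤ Λ)
    (H : ℝ → EuclideanSpace ℂ (Fin n) →L[ℂ] EuclideanSpace ℂ (Fin n))
    (hmeas : MeasureTheory.StronglyMeasurable H)
    (hbound : ∀ t ∈ Set.Icc 0 T, ‖H t‖ ≤ Λ)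
    (hholder : ∀ s ∈ Set.Icc 0 T, ∀ t ∈ Set.Icc 0 T, ‖H t - H s‖ ≤ C * |t - s| ^ α) :
    (∀ k : ℕ, 1 ≤ k →
        ‖dysonIntegral T H k - dysonRiemann T h H k‖ ≤
          C * Λ ^ (k - 1) * T ^ k * h ^ α / (Nat.factorial (k - 1) : ℝ)) ∧
      ∀ K : ℕ,
        (∑ k ∈ Finset.Icc 1 K, ‖dysonIntegral T H k - dysonRiemann T h H k‖) ≤
          C * T * Real.exp (Λ * T) * h ^ α := by
  have hh0 : 0 < h := hh ▸ div_pos hT (Nat.cast_pos.2 hM)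
  have hterm (k : ℕ) (hk : 1 ≤ k) : ‖dysonIntegral T H k - dysonRiemann T h H k‖ ≤
      C * Λ ^ (k - 1) * T ^ k * h ^ α / (Nat.factorial (k - 1) : ℝ) := by
    rw [dysonRiemann_eq_dysonIntegral]
    refine (norm_dysonIntegral_sub_le hT.le hmeas (hmeas.comp_measurable (measurable_leftGrid h))
      hbound (fun t ht => hbound _ (leftGrid_mem_Icc hh0 ht))
      (norm_sub_comp_leftGrid_le hh0 hα.1.le hC hholder) hk).trans_eq ?_
    ring
  refine ⟨hterm, fun K => ?_⟩
  calc ∑ k ∈ Finset.Icc 1 K, ‖dysonIntegral T H k - dysonRiemann T h H k‖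
      ≤ ∑ k ∈ Finset.Icc 1 K, C * T * h ^ α * ((Λ * T) ^ (k - 1) / (k - 1)!) := by
        refine Finset.sum_le_sum fun k hk => (hterm k (Finset.mem_Icc.1 hk).1).trans_eq ?_
        rw [← mul_pow_sub_one (Nat.one_le_iff_ne_zero.1 (Finset.mem_Icc.1 hk).1) T, mul_pow]
        ring
    _ ≤ C * T * h ^ α * Real.exp (Λ * T) := by
        rw [← Finset.mul_sum]
        exact mul_le_mul_of_nonneg_left
          (sum_Icc_pow_pred_div_factorial_le_exp (mul_nonneg hΛ hT.le) K) (by positivity)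
    _ = C * T * Real.exp (Λ * T) * h ^ α := by ring
end
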